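/- arXiv:1611.07239 — 5 statements merged into one kernel-verified Lean document; each statement's English description precedes it below -/
import Mathlib

section
/- Let Λ ⊂ F be a finite and monotone set of multi-indices, and let U_Λ = ∑_{i∈Λ} Δ_i be the sparse collocation operator built from tensorized detail operators Δ_i of univariate Lagrange interpolation operators U_k exact on polynomials of degree ≤ k. Then U_Λ p = p for every polynomial p in the span of monomials {ξ^ν : ν ∈ Λ}. -/
/-!
If `n < k` then `U_k` and `U_{k-1}` both reproduce `ξⁿ`, so `Δ_k ξⁿ = 0`; hence `Δ_i ξ^ν = 0`
unless `i ≤ ν`. Over the box `i ≤ ν`, which lies in `Λ` by monotonicity, the sum of the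
`Δ_i ξ^ν` factorizes into the univariate telescoping sums
`∑_{k ≤ ν_m} Δ_k ξ^{ν_m} = U_{ν_m} ξ^{ν_m} = ξ^{ν_m}`.
So `U_Λ` fixes every monomial `ξ^ν` with `ν ∈ Λ`, and by linearity their span.
-/
open scoped BigOperators

/-- Univariate detail operators `Δ_k = U_k − U_{k−1}` (with `U_{−1} = 0`). -/
noncomputable def detailOp (U : ℕ → Polynomial ℝ →ₗ[ℝ] Polynomial ℝ) :
    ℕ → Polynomial ℝ →ₗ[ℝ] Polynomial ℝ
  | 0 => U 0
  | (k + 1) => U (k + 1) - U k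

/-- The tensorized detail operator `Δ_i = ⊗_m Δ_{i_m}` acting on a polynomial in
countably many variables, factorwise on each monomial. -/
noncomputable def tensorDelta (U : ℕ → Polynomial ℝ →ₗ[ℝ] Polynomial ℝ) (i : ℕ →₀ ℕ)
    (p : MvPolynomial ℕ ℝ) : MvPolynomial ℕ ℝ :=
  ∑ ν ∈ p.support, MvPolynomial.coeff ν p •
    ∏ m ∈ i.support ∪ ν.support,
      Polynomial.aeval (MvPolynomial.X m : MvPolynomial ℕ ℝ)
        (detailOp U (i m) (Polynomial.X ^ (ν m)))

open Finset MvPolynomial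

theorem Finsupp.prod_sum_Iic {ι α R : Type*} [CommSemiring R] [DecidableEq ι]
    [AddCommMonoid α] [PartialOrder α] [IsBotZeroClass α] [OrderBot α] [LocallyFiniteOrder α]
    [DecidableEq α] (f : ι →₀ α) (g : ι → α → R) :
    ∏ m ∈ f.support, ∑ k ∈ Iic (f m), g m k = ∑ i ∈ Iic f, ∏ m ∈ f.support, g m (i m) := by
  have hIic : (fun m => Iic (f m)) = Finsupp.rangeIcc 0 f := by
    funext m
    rw [Finsupp.coe_rangeIcc, Iic_eq_Icc, bot_eq_zero, Finsupp.coe_zero, Pi.zero_apply]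
  rw [prod_sum, Iic_eq_Icc, bot_eq_zero, Finsupp.Icc_eq, Finsupp.support_zero, empty_union,
    Finset.finsupp, sum_map, hIic]
  refine Finset.sum_congr (by congr!) fun p _ => ?_
  rw [← prod_attach f.support]
  refine Finset.prod_congr rfl fun m _ => ?_
  rw [Function.Embedding.coeFn_mk, Finsupp.indicator_of_mem m.2]

section SparseCollocation

variable {U : ℕ → Polynomial ℝ →ₗ[ℝ] Polynomial ℝ}

theorem sum_detailOp_Iic (K : ℕ) : ∑ k ∈ Iic K, detailOp U k = U K := by
  rw [← Nat.range_succ_eq_Iic]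
  induction K with
  | zero => simp [detailOp]
  | succ K ih => rw [sum_range_succ, ih, detailOp, add_sub_cancel]

theorem detailOp_X_pow_of_lt
    (hexact : ∀ k : ℕ, ∀ p : Polynomial ℝ, p.natDegree ≤ k → U k p = p)
    {k n : ℕ} (h : n < k) : detailOp U k (Polynomial.X ^ n) = 0 := by
  obtain ⟨k, rfl⟩ := Nat.exists_eq_add_one_of_ne_zero (Nat.ne_zero_of_lt h)
  rw [detailOp, LinearMap.sub_apply, hexact _ _ (by simp; omega), hexact _ _ (by simp; omega),
    sub_self]

variable (U) in
noncomputable def tensorDeltaMonomial (i ν : ℕ →₀ ℕ) : MvPolynomial ℕ ℝ :=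
  ∏ m ∈ i.support ∪ ν.support,
    Polynomial.aeval (X m : MvPolynomial ℕ ℝ) (detailOp U (i m) (Polynomial.X ^ (ν m)))

theorem tensorDelta_eq_constr (i : ℕ →₀ ℕ) :
    tensorDelta U i = (basisMonomials ℕ ℝ).constr ℝ (tensorDeltaMonomial U i) := by
  funext p
  rw [Module.Basis.constr_apply]
  rfl

theorem tensorDeltaMonomial_of_le {i ν : ℕ →₀ ℕ} (h : i ≤ ν) :
    tensorDeltaMonomial U i ν =
      ∏ m ∈ ν.support,
        Polynomial.aeval (X m : MvPolynomial ℕ ℝ) (detailOp U (i m) (Polynomial.X ^ (ν m))) := by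
  rw [tensorDeltaMonomial, union_eq_right.2 (Finsupp.support_mono h)]

theorem tensorDeltaMonomial_eq_zero_of_not_le
    (hexact : ∀ k : ℕ, ∀ p : Polynomial ℝ, p.natDegree ≤ k → U k p = p)
    {i ν : ℕ →₀ ℕ} (h : ¬i ≤ ν) :
    tensorDeltaMonomial U i ν = 0 := by
  obtain ⟨m, hm_supp, hm⟩ : ∃ m ∈ i.support, ν m < i m := by simpa [Finsupp.le_iff] using h
  refine prod_eq_zero (mem_union_left _ hm_supp) ?_
  rw [detailOp_X_pow_of_lt hexact hm, map_zero]

theorem sum_Iic_tensorDeltaMonomial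
    (hexact : ∀ k : ℕ, ∀ p : Polynomial ℝ, p.natDegree ≤ k → U k p = p)
    (ν : ℕ →₀ ℕ) :
    ∑ i ∈ Iic ν, tensorDeltaMonomial U i ν = monomial ν 1 := by
  set g : ℕ → ℕ → MvPolynomial ℕ ℝ := fun m k =>
    Polynomial.aeval (X m) (detailOp U k (Polynomial.X ^ (ν m)))
  have hfactor (m : ℕ) : ∑ k ∈ Iic (ν m), g m k = X m ^ ν m := by
    rw [← map_sum, ← LinearMap.sum_apply, sum_detailOp_Iic,
      hexact _ _ (Polynomial.natDegree_X_pow_le _), map_pow, Polynomial.aeval_X]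
  calc ∑ i ∈ Iic ν, tensorDeltaMonomial U i ν
      = ∑ i ∈ Iic ν, ∏ m ∈ ν.support, g m (i m) :=
        sum_congr rfl fun i hi => tensorDeltaMonomial_of_le (mem_Iic.1 hi)
    _ = ∏ m ∈ ν.support, X m ^ ν m := by
        simp only [← Finsupp.prod_sum_Iic, hfactor]
    _ = monomial ν 1 := by rw [monomial_eq, C_1, one_mul, Finsupp.prod]

theorem sum_tensorDeltaMonomial_of_Iic_subset
    (hexact : ∀ k : ℕ, ∀ p : Polynomial ℝ, p.natDegree ≤ k → U k p = p)
    {Λ : Finset (ℕ →₀ ℕ)} {ν : ℕ →₀ ℕ} (hΛ : Iic ν ⊆ Λ) :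
    ∑ i ∈ Λ, tensorDeltaMonomial U i ν = monomial ν 1 := by
  rw [← sum_Iic_tensorDeltaMonomial hexact ν]
  refine (sum_subset hΛ fun i _ hi => ?_).symm
  exact tensorDeltaMonomial_eq_zero_of_not_le hexact (mt mem_Iic.2 hi)

variable (U) in
noncomputable def sparseCollocationOp (Λ : Finset (ℕ →₀ ℕ)) :
    MvPolynomial ℕ ℝ →ₗ[ℝ] MvPolynomial ℕ ℝ :=
  ∑ i ∈ Λ, (basisMonomials ℕ ℝ).constr ℝ (tensorDeltaMonomial U i)

theorem sparseCollocationOp_apply (Λ : Finset (ℕ →₀ ℕ)) (p : MvPolynomial ℕ ℝ) :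
    sparseCollocationOp U Λ p = ∑ i ∈ Λ, tensorDelta U i p := by
  simp only [sparseCollocationOp, LinearMap.sum_apply, tensorDelta_eq_constr]

theorem sparseCollocationOp_monomial
    (hexact : ∀ k : ℕ, ∀ p : Polynomial ℝ, p.natDegree ≤ k → U k p = p)
    {Λ : Finset (ℕ →₀ ℕ)} {ν : ℕ →₀ ℕ} (hΛ : Iic ν ⊆ Λ) :
    sparseCollocationOp U Λ (monomial ν 1) = monomial ν 1 := by
  have hbasis : monomial ν (1 : ℝ) = basisMonomials ℕ ℝ ν := by rw [coe_basisMonomials]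
  calc sparseCollocationOp U Λ (monomial ν 1)
      = ∑ i ∈ Λ, tensorDeltaMonomial U i ν := by
        simp only [hbasis, sparseCollocationOp, LinearMap.sum_apply, Module.Basis.constr_basis]
    _ = monomial ν 1 := sum_tensorDeltaMonomial_of_Iic_subset hexact hΛ

end SparseCollocation

/-- Polynomial exactness of sparse collocation: if `Λ` is finite and monotone,
the sparse collocation operator `U_Λ = ∑_{i∈Λ} Δ_i` reproduces every polynomial
in the span of the monomials `ξ^ν`, `ν ∈ Λ`. -/
theorem sparse_collocation_exact (U : ℕ → Polynomial ℝ →ₗ[ℝ] Polynomial ℝ)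
    (hexact : ∀ k : ℕ, ∀ p : Polynomial ℝ, p.natDegree ≤ k → U k p = p)
    (Λ : Finset (ℕ →₀ ℕ))
    (hmono : ∀ ν ∈ Λ, ∀ μ : ℕ →₀ ℕ, μ ≤ ν → μ ∈ Λ) :
    ∀ p ∈ Submodule.span ℝ
        {q : MvPolynomial ℕ ℝ | ∃ ν ∈ Λ, q = MvPolynomial.monomial ν (1 : ℝ)},
      ∑ i ∈ Λ, tensorDelta U i p = p := by
  intro p hp
  rw [← sparseCollocationOp_apply]
  refine LinearMap.eqOn_span' (g := LinearMap.id) ?_ hp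
  rintro _ ⟨ν, hν, rfl⟩
  exact sparseCollocationOp_monomial hexact fun μ hμ => hmono ν hν μ (mem_Iic.1 hμ)
end

section
/- Suppose c_ν ≤ ∏_{m≥1} (1 + K ν_m)^{θ+1} with K ≥ 1, θ ≥ 0, and let (τ_m) be an increasing positive sequence with ∑_m τ_m^{−p} < ∞ for some p > 0. Then for any integer r > 2(θ+1) + 2/p there exists a nonincreasing sequence (ĉ_ν)_{ν∈F} ∈ ℓ^p(F) with c_ν / b_ν^{1/2} ≤ ĉ_ν for all ν ∈ F, where b_ν = ∏_m (∑_{l=0}^r C(ν_m, l) τ_m^{2l}). -/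
/-!
Write `b(t, n) = ∑_{l ≤ r} C(n, l) t^{2l}` and `s = r/2 - (θ + 1)`, so that `s p > 1`. For `n ≥ 1`
each coordinate factor satisfies `(1 + K n)^{θ+1} / √b(τ_m, n) ≤ β_m n^{-s}` with `β_m = A / τ_m`:
compare `n^r τ_m²` with the `l = 1` term of `b` when `n ≤ r`, and with the `l = r` term, using
`C(n, r) ≥ n^r / r^{2r}`, when `n ≥ r`. Splitting `β_m = max(1, β_m) · min(1, β_m)`, the product of
these bounds is at most `D ∏_m min(1, β_m) ν_m^{-s}` with `D = ∏_m max(1, β_m)`, a finite product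
since `∑ β_m^p < ∞`. The factors of the new product are at most `1` and decrease in `ν_m`, so it is
nonincreasing in `ν`; its `p`-th powers are summable because
`∑_ν ∏_{m ∈ supp ν} w_m(ν_m) ≤ exp (∑_m ∑_{n ≥ 1} w_m(n))` for any `w ≥ 0`, and `s p > 1`.
-/

open Finset

theorem Finset.prod_sum_eq_sum_finsupp {ι : Type*} (s : Finset ι)
    (t : ι → Finset ℕ) (f : ι → ℕ → ℝ) :
    ∏ i ∈ s, ∑ n ∈ t i, f i n = ∑ ν ∈ s.finsupp t, ∏ i ∈ s, f i (ν i) := by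
  classical
  rw [prod_sum, Finset.finsupp, sum_map]
  refine Finset.sum_congr (by congr!) fun x _ => ?_
  rw [← prod_attach s]
  exact prod_congr rfl fun i _ => by simp [Finsupp.indicator_of_mem i.2]

theorem Finsupp.antitone_prod {ι : Type*} (f : ι → ℕ → ℝ) (hf0 : ∀ i n, 0 ≤ f i n)
    (hf1 : ∀ i, f i 0 = 1) (hf : ∀ i, Antitone (f i)) :
    Antitone fun ν : ι →₀ ℕ => ν.prod f := by
  intro ν μ hνμ
  dsimp only
  rw [ν.prod_of_support_subset (Finsupp.support_mono hνμ) f fun i _ => hf1 i]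
  exact prod_le_prod (fun i _ => hf0 i _) fun i _ => hf i (hνμ i)

theorem Finsupp.summable_prod {ι : Type*} (f : ι → ℕ → ℝ) (hf0 : ∀ i n, 0 ≤ f i n)
    (hf1 : ∀ i, f i 0 = 1) (u : ι → ℝ) (hu : Summable u)
    (hfu : ∀ i L, ∑ n ∈ range L, f i (n + 1) ≤ u i) :
    Summable fun ν : ι →₀ ℕ => ν.prod f := by
  classical
  have hu0 i : 0 ≤ u i := by simpa using hfu i 0
  refine summable_of_sum_le (c := Real.exp (∑' i, u i))
    (fun ν => prod_nonneg fun i _ => hf0 i _) fun S => ?_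
  set T := S.biUnion Finsupp.support
  set L := S.sup fun ν => T.sup ν
  have hS : S ⊆ T.finsupp fun _ => range (L + 1) := fun ν hν =>
    mem_finsupp_iff.2 ⟨subset_biUnion_of_mem _ hν, fun i hi =>
      mem_range_succ_iff.2 ((le_sup hi).trans (le_sup (f := fun ν : ι →₀ ℕ => T.sup ν) hν))⟩
  have hcoord i : ∑ n ∈ range (L + 1), f i n ≤ Real.exp (u i) := by
    rw [sum_range_succ', hf1]
    exact (add_le_add_left (hfu i L) 1).trans (Real.add_one_le_exp _)
  calc ∑ ν ∈ S, ν.prod f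
      ≤ ∑ ν ∈ T.finsupp fun _ => range (L + 1), ν.prod f :=
        sum_le_sum_of_subset_of_nonneg hS fun ν _ _ => prod_nonneg fun i _ => hf0 i _
    _ = ∏ i ∈ T, ∑ n ∈ range (L + 1), f i n := by
        rw [prod_sum_eq_sum_finsupp]
        exact Finset.sum_congr rfl fun ν hν =>
          ν.prod_of_support_subset (mem_finsupp_iff.1 hν).1 f fun i _ => hf1 i
    _ ≤ ∏ i ∈ T, Real.exp (u i) :=
        prod_le_prod (fun i _ => Finset.sum_nonneg fun n _ => hf0 i n) fun i _ => hcoord i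
    _ ≤ Real.exp (∑' i, u i) := by
        rw [← Real.exp_sum]
        exact Real.exp_le_exp.2 (hu.sum_le_tsum _ fun i _ => hu0 i)

theorem Finset.prod_max_one_le_of_finite {ι : Type*} {f : ι → ℝ} (hf : {i | 1 < f i}.Finite)
    (s : Finset ι) : ∏ i ∈ s, max 1 (f i) ≤ ∏ i ∈ hf.toFinset, max 1 (f i) := by
  classical
  rw [← prod_filter_of_ne (p := (· ∈ hf.toFinset)) fun i _ hi => ?_]
  · refine prod_le_prod_of_subset_of_one_le (fun i hi => ?_) (fun i _ => ?_) fun i _ _ => ?_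
    · simpa using (mem_filter.1 hi).2
    · exact zero_le_one.trans (le_max_left _ _)
    · exact le_max_left _ _
  · by_contra h
    exact hi (max_eq_left (not_lt.1 (by simpa using h)))

theorem exists_antitone_majorant_of_le_mul_rpow {ι : Type*} (a : ι → ℕ → ℝ) (β : ι → ℝ)
    {s p : ℝ} (hp : 0 < p) (hsp : 1 < s * p) (hβ : Summable fun i => β i ^ p)
    (ha0 : ∀ i n, 0 ≤ a i n) (ha : ∀ i n, n ≠ 0 → a i n ≤ β i * (n : ℝ) ^ (-s)) :
    ∃ c : (ι →₀ ℕ) → ℝ, (∀ ν, 0 ≤ c ν) ∧ Antitone c ∧ (Summable fun ν => c ν ^ p) ∧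
      ∀ ν, ν.prod a ≤ c ν := by
  classical
  have hs : 0 < s := (pos_iff_pos_of_mul_pos (by linarith)).2 hp
  have hβ0 i : 0 ≤ β i := by simpa using (ha0 i 1).trans (ha i 1 one_ne_zero)
  have hfin : {i | 1 < β i}.Finite :=
    (Filter.eventually_cofinite.1
      (hβ.tendsto_cofinite_zero.eventually (gt_mem_nhds one_pos))).subset
      fun i hi => not_lt.2 (Real.one_lt_rpow hi hp).le
  set ω : ι → ℕ → ℝ := fun i n => if n = 0 then 1 else min 1 (β i) * (n : ℝ) ^ (-s)
  set C := ∏ i ∈ hfin.toFinset, max 1 (β i)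
  have hω0 i n : 0 ≤ ω i n := by
    unfold ω; split_ifs
    exacts [zero_le_one, mul_nonneg (le_min zero_le_one (hβ0 i)) (by positivity)]
  have hω1 i : ω i 0 = 1 := if_pos rfl
  have hωanti i : Antitone (ω i) := by
    refine antitone_nat_of_succ_le fun n => ?_
    rcases n.eq_zero_or_pos with rfl | hn
    · simp [ω]
    · simp only [ω, n.succ_ne_zero, hn.ne', if_false]
      refine mul_le_mul_of_nonneg_left ?_ (le_min zero_le_one (hβ0 i))
      exact Real.rpow_le_rpow_of_nonpos (by exact_mod_cast hn) (by simp) (by linarith)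
  have hζ : Summable fun n : ℕ => ((n + 1 : ℕ) : ℝ) ^ (-(s * p)) :=
    (summable_nat_add_iff 1).2 (Real.summable_nat_rpow.2 (by linarith))
  have hωp i L : ∑ n ∈ range L, ω i (n + 1) ^ p ≤
      β i ^ p * ∑' n : ℕ, ((n + 1 : ℕ) : ℝ) ^ (-(s * p)) := by
    rw [← tsum_mul_left]
    refine (Finset.sum_le_sum fun n _ => ?_).trans ((hζ.mul_left _).sum_le_tsum _ fun n _ =>
      mul_nonneg (Real.rpow_nonneg (hβ0 i) _) (Real.rpow_nonneg (Nat.cast_nonneg _) _))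
    simp only [ω, n.succ_ne_zero, if_false]
    rw [Real.mul_rpow (le_min zero_le_one (hβ0 i)) (by positivity), ← Real.rpow_mul (by positivity),
      neg_mul]
    gcongr
    · exact le_min zero_le_one (hβ0 i)
    · exact min_le_right _ _
  have hC0 : 0 ≤ C := prod_nonneg fun i _ => zero_le_one.trans (le_max_left _ _)
  refine ⟨fun ν => C * ν.prod ω, fun ν => mul_nonneg hC0 (prod_nonneg fun i _ => hω0 i _),
    (Finsupp.antitone_prod ω hω0 hω1 hωanti).const_mul hC0, ?_, fun ν => ?_⟩
  · refine ((Finsupp.summable_prod (fun i n => ω i n ^ p) (fun i n => Real.rpow_nonneg (hω0 i n) _)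
      (fun i => by simp [hω1]) _ (hβ.mul_right _) hωp).mul_left (C ^ p)).congr fun ν => ?_
    change C ^ p * ∏ i ∈ ν.support, ω i (ν i) ^ p = (C * ∏ i ∈ ν.support, ω i (ν i)) ^ p
    rw [Real.finsetProd_rpow _ _ fun i _ => hω0 i _,
      Real.mul_rpow hC0 (prod_nonneg fun i _ => hω0 i _)]
  calc ν.prod a
      ≤ ∏ i ∈ ν.support, max 1 (β i) * ω i (ν i) := by
        refine prod_le_prod (fun i _ => ha0 i _) fun i hi => ?_
        have hi : ν i ≠ 0 := Finsupp.mem_support_iff.1 hi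
        simp only [ω, hi, if_false]
        rw [← mul_assoc, max_mul_min, one_mul]
        exact ha i _ hi
    _ = (∏ i ∈ ν.support, max 1 (β i)) * ν.prod ω := prod_mul_distrib
    _ ≤ C * ν.prod ω :=
        mul_le_mul_of_nonneg_right (prod_max_one_le_of_finite hfin _)
          (prod_nonneg fun i _ => hω0 i _)

def binomWeight (r : ℕ) (t : ℝ) (n : ℕ) : ℝ :=
  ∑ l ∈ range (r + 1), (n.choose l : ℝ) * t ^ (2 * l)

theorem choose_mul_pow_le_binomWeight {r l : ℕ} (t : ℝ) (n : ℕ) (hl : l ≤ r) :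
    (n.choose l : ℝ) * t ^ (2 * l) ≤ binomWeight r t n :=
  single_le_sum (f := fun l => (n.choose l : ℝ) * t ^ (2 * l))
    (fun l _ => mul_nonneg (Nat.cast_nonneg _) (by rw [pow_mul]; positivity))
    (mem_range_succ_iff.2 hl)

theorem one_le_binomWeight (r : ℕ) (t : ℝ) (n : ℕ) : 1 ≤ binomWeight r t n := by
  simpa using choose_mul_pow_le_binomWeight (r := r) t n (Nat.zero_le r)

theorem Nat.pow_le_pow_mul_choose {r n : ℕ} (hr : 1 ≤ r) (hrn : r ≤ n) :
    n ^ r ≤ r ^ (2 * r) * n.choose r := by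
  have hn : n ≤ r * (n + 1 - r) := by
    obtain ⟨d, rfl⟩ := Nat.exists_eq_add_of_le hrn
    rw [show r + d + 1 - r = d + 1 by omega, Nat.mul_add, Nat.mul_one]
    nlinarith
  calc n ^ r ≤ r ^ r * (n + 1 - r) ^ r := by rw [← mul_pow]; exact Nat.pow_le_pow_left hn r
    _ ≤ r ^ r * (r.factorial * n.choose r) := by
      rw [← Nat.descFactorial_eq_factorial_mul_choose]
      exact Nat.mul_le_mul_left _ (Nat.pow_sub_le_descFactorial n r)
    _ ≤ r ^ r * (r ^ r * n.choose r) :=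
      Nat.mul_le_mul_left _ (Nat.mul_le_mul_right _ (Nat.factorial_le_pow r))
    _ = r ^ (2 * r) * n.choose r := by ring

theorem pow_mul_sq_le_binomWeight {t₀ t : ℝ} {r n : ℕ} (ht₀ : 0 ≤ t₀) (ht₀1 : t₀ ≤ 1)
    (ht : t₀ ≤ t) (hr : 1 ≤ r) (hn : 1 ≤ n) :
    t₀ ^ (2 * (r - 1)) * (n : ℝ) ^ r * t ^ 2 ≤ (r : ℝ) ^ (2 * r) * binomWeight r t n := by
  rcases le_total n r with hnr | hrn
  · have hnat : n ^ r ≤ r ^ (2 * r) * n :=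
      calc n ^ r = n ^ (r - 1) * n := (pow_sub_one_mul (by omega) n).symm
        _ ≤ r ^ (2 * r) * n := Nat.mul_le_mul_right _
          ((Nat.pow_le_pow_left hnr _).trans (Nat.pow_le_pow_right (by omega) (by omega)))
    have hlin := choose_mul_pow_le_binomWeight (l := 1) t n hr
    rw [Nat.choose_one_right, mul_one] at hlin
    calc t₀ ^ (2 * (r - 1)) * (n : ℝ) ^ r * t ^ 2 ≤ 1 * ((r : ℝ) ^ (2 * r) * n) * t ^ 2 := by
          gcongr
          · exact pow_le_one₀ ht₀ ht₀1
          · exact_mod_cast hnat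
      _ ≤ (r : ℝ) ^ (2 * r) * binomWeight r t n := by
          rw [one_mul, mul_assoc]; gcongr
  · have hnat : n ^ r ≤ r ^ (2 * r) * n.choose r := Nat.pow_le_pow_mul_choose hr hrn
    have ht2 : t₀ ^ (2 * (r - 1)) * t ^ 2 ≤ t ^ (2 * r) := by
      rw [show 2 * r = 2 * (r - 1) + 2 by omega, pow_add]
      gcongr
    calc t₀ ^ (2 * (r - 1)) * (n : ℝ) ^ r * t ^ 2
        = (n : ℝ) ^ r * (t₀ ^ (2 * (r - 1)) * t ^ 2) := by ring
      _ ≤ ((r : ℝ) ^ (2 * r) * n.choose r) * t ^ (2 * r) := by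
          gcongr
          exact_mod_cast hnat
      _ ≤ (r : ℝ) ^ (2 * r) * binomWeight r t n := by
          rw [mul_assoc]; gcongr; exact choose_mul_pow_le_binomWeight t n le_rfl

theorem one_add_mul_rpow_div_sqrt_binomWeight_le {K q t₀ t : ℝ} {r n : ℕ} (hK : 1 ≤ K)
    (hq : 0 ≤ q) (ht₀ : 0 < t₀) (ht₀1 : t₀ ≤ 1) (ht : t₀ ≤ t) (hr : 1 ≤ r) (hn : n ≠ 0) :
    (1 + K * n) ^ q / √(binomWeight r t n) ≤
      (2 * K) ^ q * r ^ r / t₀ ^ (r - 1) * t⁻¹ * (n : ℝ) ^ (-(r / 2 - q)) := by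
  have hx : (1 : ℝ) ≤ n := by exact_mod_cast Nat.one_le_iff_ne_zero.2 hn
  have hx0 : (0 : ℝ) ≤ n := by positivity
  have htpos : 0 < t := ht₀.trans_le ht
  have hb : 0 < √(binomWeight r t n) :=
    Real.sqrt_pos.2 (one_pos.trans_le (one_le_binomWeight r t n))
  have hbase : (1 + K * n) ^ q ≤ (2 * K) ^ q * (n : ℝ) ^ q := by
    rw [← Real.mul_rpow (by positivity) hx0]
    exact Real.rpow_le_rpow (by positivity) (by nlinarith) hq
  have hsplit : (n : ℝ) ^ q = (n : ℝ) ^ ((r : ℝ) / 2) * (n : ℝ) ^ (-(r / 2 - q)) := by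
    rw [← Real.rpow_add (by positivity)]; ring_nf
  have hsq : ((n : ℝ) ^ ((r : ℝ) / 2)) ^ 2 = (n : ℝ) ^ r := by
    rw [← Real.rpow_mul_natCast hx0, ← Real.rpow_natCast]
    congr 1; push_cast; ring
  have hhalf : t₀ ^ (r - 1) * (n : ℝ) ^ ((r : ℝ) / 2) * t ≤ r ^ r * √(binomWeight r t n) := by
    refine (pow_le_pow_iff_left₀ (by positivity) (by positivity) two_ne_zero).1 ?_
    calc (t₀ ^ (r - 1) * (n : ℝ) ^ ((r : ℝ) / 2) * t) ^ 2
        = t₀ ^ (2 * (r - 1)) * (n : ℝ) ^ r * t ^ 2 := by rw [← hsq]; ring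
      _ ≤ (r : ℝ) ^ (2 * r) * binomWeight r t n :=
        pow_mul_sq_le_binomWeight ht₀.le ht₀1 ht hr (Nat.one_le_iff_ne_zero.2 hn)
      _ = (r ^ r * √(binomWeight r t n)) ^ 2 := by
        rw [mul_pow, Real.sq_sqrt (by linarith [one_le_binomWeight r t n])]; ring
  rw [div_le_iff₀ hb]
  calc (1 + K * n) ^ q ≤ (2 * K) ^ q * ((n : ℝ) ^ ((r : ℝ) / 2) * (n : ℝ) ^ (-(r / 2 - q))) := by
        rwa [← hsplit]
    _ ≤ (2 * K) ^ q * ((r ^ r * √(binomWeight r t n) / (t₀ ^ (r - 1) * t)) *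
          (n : ℝ) ^ (-(r / 2 - q))) := by
        gcongr
        rw [le_div_iff₀ (by positivity)]
        linarith
    _ = _ := by field_simp

/-- Construction of a nonincreasing `ℓ^p` majorant: if
`c_ν ≤ ∏_m (1 + K ν_m)^{θ+1}` with `K ≥ 1`, `θ ≥ 0`, and `(τ_m)` is an
increasing positive sequence with `∑ τ_m^{−p} < ∞`, then for any integer
`r > 2(θ+1) + 2/p` there is a nonincreasing `(ĉ_ν) ∈ ℓ^p` with
`c_ν / √b_ν ≤ ĉ_ν`, where `b_ν = ∏_m ∑_{l=0}^r C(ν_m, l) τ_m^{2l}`. -/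
theorem exists_nonincreasing_lp_majorant
    (c : (ℕ →₀ ℕ) → ℝ) (K θ : ℝ) (hK : 1 ≤ K) (hθ : 0 ≤ θ)
    (hc : ∀ ν : ℕ →₀ ℕ, c ν ≤ ∏ m ∈ ν.support, (1 + K * (ν m : ℝ)) ^ (θ + 1))
    (τ : ℕ → ℝ) (hτpos : ∀ m, 0 < τ m) (hτmono : Monotone τ)
    (p : ℝ) (hp : 0 < p) (hτsum : Summable fun m => τ m ^ (-p))
    (r : ℕ) (hr : 2 * (θ + 1) + 2 / p < (r : ℝ)) :
    ∃ chat : (ℕ →₀ ℕ) → ℝ,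
      (∀ ν, 0 ≤ chat ν) ∧
      (∀ ν₁ ν₂ : ℕ →₀ ℕ, ν₁ ≤ ν₂ → chat ν₂ ≤ chat ν₁) ∧
      (Summable fun ν => chat ν ^ p) ∧
      ∀ ν : ℕ →₀ ℕ,
        c ν / Real.sqrt (∏ m ∈ ν.support,
          ∑ l ∈ Finset.range (r + 1), (Nat.choose (ν m) l : ℝ) * τ m ^ (2 * l)) ≤
        chat ν := by
  have h2p : 2 / p * p = 2 := div_mul_cancel₀ 2 hp.ne'
  have hsp : 1 < (r / 2 - (θ + 1)) * p := by nlinarith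
  have hr1 : 1 ≤ r := by
    have : (0 : ℝ) < r := lt_of_le_of_lt (by positivity) hr
    exact_mod_cast this
  set t₀ := min 1 (τ 0)
  have ht₀ : 0 < t₀ := lt_min one_pos (hτpos 0)
  set A := (2 * K) ^ (θ + 1) * r ^ r / t₀ ^ (r - 1)
  have hA : 0 ≤ A := by positivity
  have hβ : Summable fun m => (A * (τ m)⁻¹) ^ p := by
    refine (hτsum.mul_left (A ^ p)).congr fun m => ?_
    rw [Real.mul_rpow hA (inv_nonneg.2 (hτpos m).le), Real.inv_rpow (hτpos m).le,
      Real.rpow_neg (hτpos m).le]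
  obtain ⟨chat, hchat0, hanti, hsum, hdom⟩ := exists_antitone_majorant_of_le_mul_rpow
    (fun m n => (1 + K * n) ^ (θ + 1) / √(binomWeight r (τ m) n)) (fun m => A * (τ m)⁻¹)
    hp hsp hβ (fun m n => by positivity) fun m n hn =>
      one_add_mul_rpow_div_sqrt_binomWeight_le hK (by linarith) ht₀ (min_le_left _ _)
        ((min_le_right _ _).trans (hτmono (Nat.zero_le m))) hr1 hn
  refine ⟨chat, hchat0, hanti, hsum, fun ν => le_trans ?_ (hdom ν)⟩
  change c ν / √(∏ m ∈ ν.support, binomWeight r (τ m) (ν m)) ≤ _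
  rw [Real.sqrt_prod _ fun m _ => zero_le_one.trans (one_le_binomWeight r (τ m) (ν m)),
    Finsupp.prod, prod_div_distrib]
  exact div_le_div_of_nonneg_right (hc ν) (prod_nonneg fun m _ => Real.sqrt_nonneg _)
end

section
/- For every finitely supported multi-index ν ∈ F there exists a bijection n : R_ν → {1, …, |R_ν|} such that ∏_{m≥1}(1 + i_m) ≤ n(i) for all i ∈ R_ν, where R_ν = {i : i ≤ ν componentwise}. -/
/-!
Number the envelope `R_ν` along a linear extension of the componentwise order. Then every
`i ∈ R_ν` comes after all of its downset `{j : j ≤ i} ⊆ R_ν`, whose cardinality is the tensor grid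
size `∏ m, (1 + i m)`, so its number is at least that size.
-/

open Finset

namespace Finset

theorem exists_bijOn_Icc_strictMonoOn_of_linearOrder {β : Type*} [LinearOrder β] (s : Finset β) :
    ∃ n : β → ℕ, Set.BijOn n s (Set.Icc 1 #s) ∧ StrictMonoOn n s := by
  set n : β → ℕ := fun j => #{k ∈ s | k ≤ j}
  have hmono : StrictMonoOn n s := fun a _ b hb hab =>
    card_lt_card <| (ssubset_iff_of_subset fun k hk =>
      mem_filter.2 ⟨(mem_filter.1 hk).1, (mem_filter.1 hk).2.trans hab.le⟩).2
      ⟨b, mem_filter.2 ⟨hb, le_rfl⟩, fun h => (mem_filter.1 h).2.not_gt hab⟩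
  have hmaps : Set.MapsTo n s (Set.Icc 1 #s) := fun a ha =>
    ⟨card_pos.2 ⟨a, mem_filter.2 ⟨ha, le_rfl⟩⟩, card_filter_le _ _⟩
  refine ⟨n, ⟨hmaps, hmono.injOn, ?_⟩, hmono⟩
  simpa using surjOn_of_injOn_of_card_le (t := Icc 1 #s) n (by simpa using hmaps) hmono.injOn
    (by simp)

theorem exists_bijOn_Icc_strictMonoOn {α : Type*} [PartialOrder α] (s : Finset α) :
    ∃ n : α → ℕ, Set.BijOn n s (Set.Icc 1 #s) ∧ StrictMonoOn n s := by
  let f : α ↪ LinearExtension α := ⟨toLinearExtension, fun _ _ h => h⟩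
  have hf : StrictMono f := toLinearExtension.monotone.strictMono_of_injective f.injective
  obtain ⟨n, hbij, hmono⟩ := exists_bijOn_Icc_strictMonoOn_of_linearOrder (s.map f)
  refine ⟨n ∘ f, ?_, fun a ha b hb hab =>
    hmono (mem_map_of_mem f ha) (mem_map_of_mem f hb) (hf hab)⟩
  rw [card_map, coe_map] at hbij
  exact hbij.comp f.injective.injOn.bijOn_image

theorem card_Iic_le_of_monotoneOn {α : Type*} [PartialOrder α] [LocallyFiniteOrderBot α]
    {s : Set α} {n : α → ℕ} (hmono : MonotoneOn n s) (hinj : Set.InjOn n s)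
    (hpos : ∀ j ∈ s, 1 ≤ n j) {i : α} (hs : ↑(Iic i) ⊆ s) : #(Iic i) ≤ n i := by
  have hi : i ∈ s := hs (mem_Iic.2 le_rfl)
  calc #(Iic i) ≤ #(Icc 1 (n i)) := card_le_card_of_injOn n
        (fun j hj => mem_Icc.2 ⟨hpos j (hs hj), hmono (hs hj) hi (mem_Iic.1 hj)⟩)
        (hinj.mono hs)
    _ = n i := by simp

end Finset

theorem Finsupp.card_Iic_eq_prod {ι : Type*} [DecidableEq ι] (i : ι →₀ ℕ) :
    #(Iic i) = ∏ m ∈ i.support, (1 + i m) := by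
  simp [Finsupp.card_Iic, add_comm]

/-- For every finitely supported multi-index `ν` there is an ordering (bijection)
`n : R_ν → {1, …, |R_ν|}` of the rectangular envelope `R_ν = {i : i ≤ ν}` such
that the tensor grid size `∏_m (1 + i_m)` is bounded by `n(i)`. -/
theorem exists_ordering_envelope (ν : ℕ →₀ ℕ) :
    ∃ n : (ℕ →₀ ℕ) → ℕ,
      Set.BijOn n (↑(Finset.Iic ν)) (↑(Finset.Icc 1 (Finset.Iic ν).card)) ∧
      ∀ i ∈ Finset.Iic ν, ∏ m ∈ i.support, (1 + i m) ≤ n i := by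
  obtain ⟨n, hbij, hmono⟩ := (Iic ν).exists_bijOn_Icc_strictMonoOn
  refine ⟨n, by rwa [coe_Icc], fun i hi => ?_⟩
  rw [← Finsupp.card_Iic_eq_prod]
  exact card_Iic_le_of_monotoneOn hmono.monotoneOn hbij.injOn (fun j hj => (hbij.mapsTo hj).1)
    (by simpa using Iic_subset_Iic.2 (mem_Iic.1 hi))
end

section
/- For every finitely supported multi-index ν ∈ F: ∑_{i ≤ ν} ∏_{m≥1}(1 + i_m) ≤ |R_ν|(|R_ν| + 1)/2, where |R_ν| = ∏_{m≥1}(1 + ν_m). -/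
/-!
Summing a product of one-variable functions over the box `Iic ν` factorises, so the left-hand
side is `∏ₘ T(1 + νₘ)` with `T n = n (n + 1) / 2` the triangular numbers. Since
`T a * T b ≤ T (a * b)`, this is at most `T (∏ₘ (1 + νₘ))`.
-/

open Finset

namespace Finsupp

variable {ι α : Type*} [DecidableEq ι] [AddCommMonoid α] [PartialOrder α] [CanonicallyOrderedAdd α]
  [OrderBot α] [LocallyFiniteOrder α] [DecidableEq α]

theorem Iic_eq_finsupp (ν : ι →₀ α) : Iic ν = ν.support.finsupp fun m ↦ Iic (ν m) := by
  ext i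
  simp only [mem_Iic, mem_finsupp_iff, Finsupp.le_def]
  refine ⟨fun h ↦ ⟨fun m hm ↦ ?_, fun m _ ↦ h m⟩, fun ⟨hsupp, h⟩ m ↦ ?_⟩
  · exact mem_support_iff.2 fun hν ↦ mem_support_iff.1 hm (le_zero_iff.1 (hν ▸ h m))
  · by_cases hm : m ∈ ν.support
    · exact h m hm
    · rw [notMem_support_iff.1 fun hi ↦ hm (hsupp hi)]
      exact zero_le

theorem sum_Iic_prod_eq_prod_sum {R : Type*} [CommSemiring R] (ν : ι →₀ α) (g : ι → α → R)
    (hg : ∀ m, g m 0 = 1) :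
    ∑ i ∈ Iic ν, i.prod g = ∏ m ∈ ν.support, ∑ k ∈ Iic (ν m), g m k := by
  rw [Iic_eq_finsupp, prod_sum, Finset.finsupp, sum_map]
  -- `Finset.finsupp` builds its `pi` with a classical `DecidableEq` instance
  refine Finset.sum_congr (by congr!) fun p _ ↦ ?_
  simp only [Function.Embedding.coeFn_mk]
  rw [prod_of_support_subset _ (support_indicator_subset _ _) _ fun m _ ↦ hg m, ← prod_attach]
  exact Finset.prod_congr rfl fun m _ ↦ by rw [indicator_of_mem]

end Finsupp

theorem Nat.sum_Iic_one_add (a : ℕ) : ∑ k ∈ Iic a, (1 + k) = (1 + a) * (1 + a + 1) / 2 := by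
  rw [← Nat.range_succ_eq_Iic]
  calc ∑ k ∈ range (a + 1), (1 + k) = ∑ k ∈ range (a + 2), k := by
        rw [sum_range_succ' _ (a + 1)]; simp [add_comm]
    _ = (1 + a) * (1 + a + 1) / 2 := by rw [sum_range_id, mul_comm, add_comm 1 a]; rfl

theorem Nat.triangle_mul_triangle_le (a b : ℕ) :
    a * (a + 1) / 2 * (b * (b + 1) / 2) ≤ a * b * (a * b + 1) / 2 := by
  obtain ⟨x, hx⟩ := Nat.even_mul_succ_self a
  obtain ⟨y, hy⟩ := Nat.even_mul_succ_self b
  obtain ⟨z, hz⟩ := Nat.even_mul_succ_self (a * b)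
  rw [hx, hy, hz, show (x + x) / 2 = x by omega, show (y + y) / 2 = y by omega,
    show (z + z) / 2 = z by omega]
  -- for `a, b ≥ 1`, `(a + 1) (b + 1) ≤ 2 (a b + 1)` is `(a - 1) (b - 1) ≥ 0`
  have key : a * b * ((a + 1) * (b + 1)) ≤ a * b * (2 * (a * b + 1)) := by
    rcases Nat.eq_zero_or_pos a with rfl | ha
    · simp
    rcases Nat.eq_zero_or_pos b with rfl | hb
    · simp
    exact Nat.mul_le_mul_left _ (by nlinarith)
  nlinarith [key]

theorem Finset.prod_triangle_le {ι : Type*} (s : Finset ι) (a : ι → ℕ) :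
    ∏ m ∈ s, a m * (a m + 1) / 2 ≤ (∏ m ∈ s, a m) * (∏ m ∈ s, a m + 1) / 2 :=
  le_prod_of_submultiplicative (M := ℕ) (N := ℕᵒᵈ) (fun n ↦ OrderDual.toDual (n * (n + 1) / 2))
    le_rfl Nat.triangle_mul_triangle_le s a

/-- The total number of tensor-grid points over the rectangular envelope:
`∑_{i ≤ ν} ∏_m (1 + i_m) ≤ |R_ν|(|R_ν| + 1)/2` where `|R_ν| = ∏_m (1 + ν_m)`. -/
theorem sum_gridsizes_envelope_le (ν : ℕ →₀ ℕ) :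
    ∑ i ∈ Finset.Iic ν, ∏ m ∈ i.support, (1 + i m) ≤
      (∏ m ∈ ν.support, (1 + ν m)) * ((∏ m ∈ ν.support, (1 + ν m)) + 1) / 2 := by
  calc ∑ i ∈ Iic ν, ∏ m ∈ i.support, (1 + i m)
      = ∏ m ∈ ν.support, ∑ k ∈ Iic (ν m), (1 + k) :=
        Finsupp.sum_Iic_prod_eq_prod_sum ν (fun _ k ↦ 1 + k) fun _ ↦ rfl
    _ = ∏ m ∈ ν.support, (1 + ν m) * (1 + ν m + 1) / 2 := by simp only [Nat.sum_Iic_one_add]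
    _ ≤ _ := prod_triangle_le ν.support fun m ↦ 1 + ν m
end

section
/- Let Λ ⊂ F be a finite monotone set of multi-indices and let Ξ_Λ = ⋃_{i∈Λ} Ξ^{(i)} be the associated sparse grid, where each tensor grid Ξ^{(i)} has cardinality ∏_m (1+i_m). Then |Ξ_Λ| ≤ |Λ|(|Λ|+1)/2; in particular |Ξ_Λ| ∈ O(|Λ|²). -/
/-!
Each tensor grid `Ξ^{(i)}` has `∏ m, (1 + i m) = #(Iic i)` points, and by monotonicity `Iic i ⊆ Λ`.
So `|Ξ_Λ| ≤ ∑_{i ∈ Λ} #{j ∈ Λ | j ≤ i}`, the number of comparable pairs `j ≤ i` in `Λ`.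
Counting them once as `j ≤ i` and once as `i ≤ j` counts every pair with `i ≠ j` at most once
(antisymmetry) and the diagonal twice, so twice their number is at most `|Λ|² + |Λ|`.
-/

open Finset

section ComparablePairs

variable {α : Type*} [PartialOrder α] [DecidableLE α] (s : Finset α)

theorem sum_card_filter_le_eq_sum_card_filter_ge :
    ∑ i ∈ s, #{j ∈ s | j ≤ i} = ∑ i ∈ s, #{j ∈ s | i ≤ j} := by
  simp only [card_filter]
  exact sum_comm

theorem card_filter_le_add_card_filter_ge_le (i : α) :
    #{j ∈ s | j ≤ i} + #{j ∈ s | i ≤ j} ≤ #s + 1 := by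
  classical
  have hinter : {j ∈ s | j ≤ i} ∩ {j ∈ s | i ≤ j} ⊆ {i} := fun j hj => by
    simp only [mem_inter, mem_filter] at hj
    exact mem_singleton.mpr (le_antisymm hj.1.2 hj.2.2)
  rw [← card_union_add_card_inter]
  gcongr
  · exact union_subset (filter_subset _ _) (filter_subset _ _)
  · simpa using card_le_card hinter

theorem sum_card_filter_le_le :
    ∑ i ∈ s, #{j ∈ s | j ≤ i} ≤ #s * (#s + 1) / 2 := by
  rw [Nat.le_div_iff_mul_le two_pos, mul_two]
  nth_rewrite 2 [sum_card_filter_le_eq_sum_card_filter_ge]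
  calc ∑ i ∈ s, #{j ∈ s | j ≤ i} + ∑ i ∈ s, #{j ∈ s | i ≤ j}
      = ∑ i ∈ s, (#{j ∈ s | j ≤ i} + #{j ∈ s | i ≤ j}) := sum_add_distrib.symm
    _ ≤ ∑ _i ∈ s, (#s + 1) := sum_le_sum fun i _ => card_filter_le_add_card_filter_ge_le s i
    _ = #s * (#s + 1) := by rw [sum_const, smul_eq_mul]

end ComparablePairs

def tensorGrid {σ β : Type*} (nodes : ℕ → Finset β) (i : σ →₀ ℕ) : Set (σ → β) :=
  {ξ | ∀ m, ξ m ∈ nodes (i m)}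

-- A grid point is determined by its coordinates on `i.support`, as `nodes 0` has at most one element.
theorem ncard_tensorGrid_le {σ β : Type*} (nodes : ℕ → Finset β) (h0 : #(nodes 0) ≤ 1)
    (i : σ →₀ ℕ) : (tensorGrid nodes i).ncard ≤ ∏ m ∈ i.support, #(nodes (i m)) := by
  classical
  rw [← card_pi, ← Set.ncard_coe_finset]
  refine Set.ncard_le_ncard_of_injOn (fun ξ m _ => ξ m) (fun ξ hξ => ?_) ?_ (finite_toSet _)
  · simpa [mem_pi] using fun m _ => hξ m
  · intro ξ hξ η hη hξη
    funext m
    by_cases hm : m ∈ i.support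
    · exact congr_fun₂ hξη m hm
    · have him : i m = 0 := Finsupp.notMem_support_iff.mp hm
      have hξm := hξ m
      have hηm := hη m
      rw [him] at hξm hηm
      exact card_le_one.mp h0 _ hξm _ hηm

/-- Quadratic bound on the size of the sparse grid associated with a finite
monotone multi-index set `Λ`: with univariate node sets of cardinality `k+1` at
level `k`, the sparse grid `Ξ_Λ = ⋃_{i∈Λ} Ξ^{(i)}` (where `Ξ^{(i)}` is the
tensor grid with nodes `nodes (i m)` in variable `m`) satisfies
`|Ξ_Λ| ≤ |Λ|(|Λ|+1)/2`. -/
theorem sparse_grid_card_le (Λ : Finset (ℕ →₀ ℕ))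
    (hmono : ∀ a ∈ Λ, ∀ b : ℕ →₀ ℕ, b ≤ a → b ∈ Λ)
    (nodes : ℕ → Finset ℝ) (hcard : ∀ k, (nodes k).card = k + 1) :
    (⋃ i ∈ (Λ : Set (ℕ →₀ ℕ)), {ξ : ℕ → ℝ | ∀ m, ξ m ∈ nodes (i m)}).ncard ≤
      Λ.card * (Λ.card + 1) / 2 := by
  have hIic : ∀ i ∈ Λ, Iic i = {j ∈ Λ | j ≤ i} := fun i hi => by
    ext j
    simpa using fun hji => hmono i hi j hji
  calc (⋃ i ∈ Λ, tensorGrid nodes i).ncard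
      ≤ ∑ i ∈ Λ, (tensorGrid nodes i).ncard := set_ncard_biUnion_le _ _
    _ ≤ ∑ i ∈ Λ, #(Iic i) := sum_le_sum fun i _ => by
        simpa [Finsupp.card_Iic, hcard] using ncard_tensorGrid_le nodes (hcard 0).le i
    _ = ∑ i ∈ Λ, #{j ∈ Λ | j ≤ i} := sum_congr rfl fun i hi => by rw [hIic i hi]
    _ ≤ #Λ * (#Λ + 1) / 2 := sum_card_filter_le_le Λ
end
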